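/- Let φ be a Leibniz 2-cocycle on the twisted Schrödinger-Virasoro algebra with φ(L_0, M_n) = 0 and φ(M_n, L_0) = 0 for all n ∈ ℤ. Then φ(M_m, M_n) = 0 for all m, n ∈ ℤ. -/
import Mathlib


abbrev B : Type := ℤ ⊕ ℤ ⊕ ℤ
abbrev V : Type := B →₀ ℂ

noncomputable def Lg (n : ℤ) : V := Finsupp.single (Sum.inl n) 1
noncomputable def Yg (n : ℤ) : V := Finsupp.single (Sum.inr (Sum.inl n)) 1
noncomputable def Mg (n : ℤ) : V := Finsupp.single (Sum.inr (Sum.inr n)) 1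

/-- Bracket on basis elements of the twisted Schrödinger–Virasoro algebra. -/
noncomputable def brB : B → B → V
  | Sum.inl n, Sum.inl m => ((m : ℂ) - n) • Lg (n + m)
  | Sum.inl n, Sum.inr (Sum.inl m) => ((m : ℂ) - n / 2) • Yg (n + m)
  | Sum.inl n, Sum.inr (Sum.inr p) => (p : ℂ) • Mg (n + p)
  | Sum.inr (Sum.inl m), Sum.inl n => -(((m : ℂ) - n / 2) • Yg (n + m))
  | Sum.inr (Sum.inr p), Sum.inl n => -((p : ℂ) • Mg (n + p))
  | Sum.inr (Sum.inl m), Sum.inr (Sum.inl m') => ((m' : ℂ) - m) • Mg (m + m')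
  | _, _ => 0

/-- The bilinear extension of the bracket to the whole space. -/
noncomputable def bk : V →ₗ[ℂ] V →ₗ[ℂ] V :=
  Finsupp.lsum ℂ fun a => LinearMap.toSpanSingleton ℂ (V →ₗ[ℂ] V)
    (Finsupp.lsum ℂ fun b => LinearMap.toSpanSingleton ℂ V (brB a b))

/-- `φ` is a Leibniz 2-cocycle on the twisted Schrödinger–Virasoro algebra. -/
def IsLeibnizCocycle (φ : V →ₗ[ℂ] V →ₗ[ℂ] ℂ) : Prop :=
  ∀ x y z : V, φ x (bk y z) = φ (bk x y) z - φ (bk x z) y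

lemma bk_basis (a b : B) : bk (Finsupp.single a 1) (Finsupp.single b 1) = brB a b := by
  simp [bk]

lemma bk_MY (m a : ℤ) : bk (Mg m) (Yg a) = 0 := bk_basis _ _

lemma bk_YY (a b : ℤ) : bk (Yg a) (Yg b) = ((b : ℂ) - a) • Mg (a + b) := bk_basis _ _

lemma key (φ : V →ₗ[ℂ] V →ₗ[ℂ] ℂ) (hco : IsLeibnizCocycle φ) (m a b : ℤ)
    (h : (b : ℂ) - a ≠ 0) : φ (Mg m) (Mg (a + b)) = 0 := by
  have hc := hco (Mg m) (Yg a) (Yg b)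
  rw [bk_YY, bk_MY, bk_MY] at hc
  simp only [map_zero, LinearMap.zero_apply, map_smul, smul_eq_mul, sub_self] at hc
  exact (mul_eq_zero.mp hc).resolve_left h

theorem stmt8 (φ : V →ₗ[ℂ] V →ₗ[ℂ] ℂ) (hco : IsLeibnizCocycle φ)
    (h1 : ∀ n : ℤ, φ (Lg 0) (Mg n) = 0) (h2 : ∀ n : ℤ, φ (Mg n) (Lg 0) = 0) :
    ∀ m n : ℤ, φ (Mg m) (Mg n) = 0 := by
  intro m n
  by_cases hn : n = 0
  · subst hn
    have := key φ hco m (-1) 1 (by norm_num)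
    simpa using this
  · have := key φ hco m 0 n (by exact_mod_cast sub_ne_zero.mpr (by exact_mod_cast hn))
    simpa using this
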